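/- Let f : ℝ^ℓ → ℝ^ℓ be continuous, M > 0 a bound with ‖f(z)‖ ≤ M for all z, and suppose a probability measure P on ℝ^ℓ satisfies P({z : ⟨p, f(z)⟩ = 0}) = 0 for a fixed p ≠ 0. If m_U − m_L is bounded measurable and nonnegative, and g : ℝ^ℓ → ℝ^ℓ is continuous in a parameter η with ‖∂⟨p, g_η(z)⟩/∂η‖ ≤ M uniformly, then η ↦ ∫ ⟨p, g_{η₀}(z)⟩ (1{⟨p, g_η(z)⟩ > 0} − 1{⟨p, g_{η₀}(z)⟩ > 0})(m_U(z) − m_L(z)) dP(z) is differentiable at η₀ with derivative 0. In particular, |∫ ⟨p, g_{η₀}⟩ (1{⟨p, g_{η_n}⟩ > 0} − 1{⟨p, g_{η₀}⟩ > 0})(m_U − m_L) dP| / |η_n − η₀| → 0 as η_n → η₀. -/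

import Mathlib

/-! By the mean value theorem `|⟨p, g_η z⟩ - ⟨p, g_{η₀} z⟩| ≤ M |η - η₀|`, so the two indicators
can only disagree where `|⟨p, g_{η₀} z⟩| ≤ M |η - η₀|`, and there the integrand is at most
`M |η - η₀| · sup |m_U - m_L|`. The integral is thus bounded by this times the measure of that set,
which tends to `P {⟨p, g_{η₀}⟩ = 0} = 0` by continuity of measure from above: the integral is
`o(|η - η₀|)`. -/

open MeasureTheory Filter

/-- The integral appearing in Lemma C.6: the contribution of the switching set. -/
noncomputable def switchInt {ℓ : ℕ} (P : Measure (EuclideanSpace ℝ (Fin ℓ)))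
    (p : EuclideanSpace ℝ (Fin ℓ))
    (g : ℝ → EuclideanSpace ℝ (Fin ℓ) → EuclideanSpace ℝ (Fin ℓ))
    (mL mU : EuclideanSpace ℝ (Fin ℓ) → ℝ) (η₀ η : ℝ) : ℝ :=
  ∫ z, (inner ℝ p (g η₀ z) : ℝ) *
      (((if 0 < (inner ℝ p (g η z) : ℝ) then (1 : ℝ) else 0) -
        (if 0 < (inner ℝ p (g η₀ z) : ℝ) then (1 : ℝ) else 0)) * (mU z - mL z)) ∂P

open Set Topology

theorem abs_le_abs_sub_of_ite_pos_ne {x y : ℝ}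
    (h : (if 0 < y then (1 : ℝ) else 0) ≠ if 0 < x then 1 else 0) : |x| ≤ |y - x| := by
  split_ifs at h <;> simp only [ne_eq, not_true_eq_false] at h <;>
    cases abs_cases x <;> cases abs_cases (y - x) <;> linarith

theorem abs_ite_pos_sub_ite_pos_le_one (x y : ℝ) :
    |(if 0 < y then (1 : ℝ) else 0) - if 0 < x then 1 else 0| ≤ 1 := by
  split_ifs <;> norm_num

theorem tendsto_measureReal_abs_le_nhds_zero {α : Type*} [MeasurableSpace α] {μ : Measure α}
    [IsFiniteMeasure μ] {X : α → ℝ} (hX : Measurable X) (h0 : μ {z | X z = 0} = 0) :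
    Tendsto (fun r => μ.real {z | |X z| ≤ r}) (𝓝 0) (𝓝 0) := by
  have hinter : ⋂ r > (0 : ℝ), {z | |X z| ≤ r} = {z | X z = 0} := by
    ext z
    simp only [mem_iInter, mem_ofPred_eq]
    exact ⟨fun h => abs_nonpos_iff.mp (le_of_forall_gt_imp_ge_of_dense h),
      fun h r hr => by rw [h, abs_zero]; exact hr.le⟩
  have hright : Tendsto (fun r => μ {z | |X z| ≤ r}) (𝓝[>] 0) (𝓝 0) := by
    have := tendsto_measure_biInter_gt (μ := μ) (s := fun r : ℝ => {z | |X z| ≤ r}) (a := 0)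
      (fun r _ => (measurableSet_le hX.abs measurable_const).nullMeasurableSet)
      (fun i j _ hij z hz => le_trans hz hij) ⟨1, one_pos, measure_ne_top μ _⟩
    rwa [hinter, h0] at this
  have hleft : ∀ r ≤ (0 : ℝ), μ {z | |X z| ≤ r} = 0 := fun r hr =>
    measure_mono_null (fun z hz => abs_nonpos_iff.mp (le_trans hz hr)) h0
  have hnhds : Tendsto (fun r => μ {z | |X z| ≤ r}) (𝓝 0) (𝓝 0) := by
    rw [← nhdsLE_sup_nhdsGT]
    have hleft' : (fun r => μ {z | |X z| ≤ r}) =ᶠ[𝓝[≤] 0] fun _ => 0 :=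
      eventually_nhdsWithin_of_forall hleft
    exact (tendsto_const_nhds.congr' hleft'.symm).sup hright
  exact (ENNReal.tendsto_toReal ENNReal.zero_ne_top).comp hnhds

theorem abs_integral_mul_ite_pos_sub_le {α : Type*} [MeasurableSpace α] {μ : Measure α}
    [IsFiniteMeasure μ] {X Y w : α → ℝ} (hX : Measurable X) {ε B : ℝ}
    (hYX : ∀ z, |Y z - X z| ≤ ε) (hw : ∀ z, |w z| ≤ B) :
    |∫ z, X z * (((if 0 < Y z then (1 : ℝ) else 0) - if 0 < X z then 1 else 0) * w z) ∂μ|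
      ≤ ε * B * μ.real {z | |X z| ≤ ε} := by
  set S := {z | |X z| ≤ ε}
  have hS : MeasurableSet S := measurableSet_le hX.abs measurable_const
  have hbound : ∀ z, ‖X z * (((if 0 < Y z then (1 : ℝ) else 0) - if 0 < X z then 1 else 0)
      * w z)‖ ≤ S.indicator (fun _ => ε * B) z := by
    intro z
    have hB : 0 ≤ B := (abs_nonneg _).trans (hw z)
    by_cases hswitch : (if 0 < Y z then (1 : ℝ) else 0) = if 0 < X z then 1 else 0
    · rw [hswitch, sub_self, zero_mul, mul_zero, norm_zero]
      exact indicator_nonneg (fun _ _ => mul_nonneg ((abs_nonneg _).trans (hYX z)) hB) z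
    · have hzS : z ∈ S := (abs_le_abs_sub_of_ite_pos_ne hswitch).trans (hYX z)
      rw [indicator_of_mem hzS, Real.norm_eq_abs, abs_mul, abs_mul]
      calc |X z| * (|(if 0 < Y z then (1 : ℝ) else 0) - if 0 < X z then 1 else 0| * |w z|)
          ≤ ε * (1 * B) :=
            mul_le_mul hzS (mul_le_mul (abs_ite_pos_sub_ite_pos_le_one _ _) (hw z)
              (abs_nonneg _) zero_le_one) (by positivity) ((abs_nonneg _).trans hzS)
        _ = ε * B := by ring
  calc _ ≤ ∫ z, S.indicator (fun _ => ε * B) z ∂μ :=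
        norm_integral_le_of_norm_le ((integrable_const _).indicator hS) (.of_forall hbound)
    _ = ε * B * μ.real S := by rw [integral_indicator_const _ hS, smul_eq_mul, mul_comm]

theorem hasDerivAt_zero_of_abs_le_mul {f ρ : ℝ → ℝ} {x : ℝ} (hfx : f x = 0)
    (hρ : Tendsto ρ (𝓝 x) (𝓝 0)) (hle : ∀ y, |f y| ≤ |y - x| * ρ y) : HasDerivAt f 0 x := by
  rw [hasDerivAt_iff_isLittleO]
  have hO : (fun y => f y - f x - (y - x) • (0 : ℝ)) =O[𝓝 x] fun y => ρ y * (y - x) :=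
    .of_bound' <| .of_forall fun y => by
      rw [hfx, smul_zero, sub_zero, sub_zero, Real.norm_eq_abs, Real.norm_eq_abs, abs_mul, mul_comm]
      exact (hle y).trans (mul_le_mul_of_nonneg_left (le_abs_self _) (abs_nonneg _))
  exact hO.trans_isLittleO
    (((Asymptotics.isLittleO_one_iff ℝ).mpr hρ).mul_isBigO (Asymptotics.isBigO_refl _ _)
      |>.congr_right fun _ => one_mul _)

theorem stmt18_general {ℓ : ℕ} (P : Measure (EuclideanSpace ℝ (Fin ℓ))) [IsProbabilityMeasure P]
    (M : ℝ)
    (g : ℝ → EuclideanSpace ℝ (Fin ℓ) → EuclideanSpace ℝ (Fin ℓ))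
    (hgmeas : ∀ η, Measurable (g η))
    (p : EuclideanSpace ℝ (Fin ℓ)) (η₀ : ℝ)
    (hzero : P {z | (inner ℝ p (g η₀ z) : ℝ) = 0} = 0)
    (mL mU : EuclideanSpace ℝ (Fin ℓ) → ℝ)
    (hmb : ∃ C : ℝ, ∀ z, |mL z| ≤ C ∧ |mU z| ≤ C)
    (d : ℝ → EuclideanSpace ℝ (Fin ℓ) → ℝ)
    (hd : ∀ η z, HasDerivAt (fun t => (inner ℝ p (g t z) : ℝ)) (d η z) η)
    (hdb : ∀ η z, |d η z| ≤ M) :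
    HasDerivAt (fun η => switchInt P p g mL mU η₀ η) 0 η₀ ∧
    ∀ q : ℕ → ℝ, Tendsto q atTop (nhdsWithin η₀ {η₀}ᶜ) →
      Tendsto (fun n => |switchInt P p g mL mU η₀ (q n)| / |q n - η₀|) atTop (nhds 0) := by
  obtain ⟨C, hC⟩ := hmb
  set X := fun z => (inner ℝ p (g η₀ z) : ℝ)
  have hX : Measurable X := measurable_const.inner (hgmeas η₀)
  have hlip : ∀ η z, |(inner ℝ p (g η z) : ℝ) - X z| ≤ M * |η - η₀| := fun η z => by
    simpa [Real.norm_eq_abs] using convex_univ.norm_image_sub_le_of_norm_hasDerivWithin_le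
      (fun t _ => (hd t z).hasDerivWithinAt) (fun t _ => by simpa using hdb t z)
      (mem_univ η₀) (mem_univ η)
  have hw : ∀ z, |mU z - mL z| ≤ 2 * C := fun z =>
    (abs_sub _ _).trans (by linarith [(hC z).1, (hC z).2])
  have hsmall :
      Tendsto (fun η => 2 * C * M * P.real {z | |X z| ≤ M * |η - η₀|}) (𝓝 η₀) (𝓝 0) := by
    have hr : Tendsto (fun η => M * |η - η₀|) (𝓝 η₀) (𝓝 0) :=
      (show Continuous fun η => M * |η - η₀| by fun_prop).tendsto' η₀ 0 (by simp)
    simpa using ((tendsto_measureReal_abs_le_nhds_zero hX hzero).comp hr).const_mul (2 * C * M)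
  have hderiv : HasDerivAt (fun η => switchInt P p g mL mU η₀ η) 0 η₀ := by
    refine hasDerivAt_zero_of_abs_le_mul (by simp [switchInt]) hsmall fun η => ?_
    calc _ ≤ M * |η - η₀| * (2 * C) * P.real {z | |X z| ≤ M * |η - η₀|} :=
          abs_integral_mul_ite_pos_sub_le hX (hlip η) hw
      _ = _ := by ring
  refine ⟨hderiv, fun q hq => ?_⟩
  have hslope := ((hasDerivAt_iff_tendsto_slope.mp hderiv).comp hq).abs
  rw [abs_zero] at hslope
  refine hslope.congr fun n => ?_
  simp [slope_def_field, switchInt, abs_div]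

/-- The switching set contributes nothing to the pathwise derivative:
`η ↦ ∫ ⟨p,g_{η₀}⟩(1{⟨p,g_η⟩>0} − 1{⟨p,g_{η₀}⟩>0})(m_U − m_L) dP` is differentiable
at `η₀` with derivative 0; in particular the difference quotient along any
sequence `η_n → η₀` tends to 0. -/
theorem stmt18 {ℓ : ℕ} (P : Measure (EuclideanSpace ℝ (Fin ℓ))) [IsProbabilityMeasure P]
    (M : ℝ) (hM : 0 < M)
    (g : ℝ → EuclideanSpace ℝ (Fin ℓ) → EuclideanSpace ℝ (Fin ℓ))
    (hgmeas : ∀ η, Measurable (g η))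
    (p : EuclideanSpace ℝ (Fin ℓ)) (hp : p ≠ 0) (η₀ : ℝ)
    (hgcont : Continuous (g η₀)) (hgb : ∀ z, ‖g η₀ z‖ ≤ M)
    (hzero : P {z | (inner ℝ p (g η₀ z) : ℝ) = 0} = 0)
    (mL mU : EuclideanSpace ℝ (Fin ℓ) → ℝ)
    (hmLm : Measurable mL) (hmUm : Measurable mU)
    (hmb : ∃ C : ℝ, ∀ z, |mL z| ≤ C ∧ |mU z| ≤ C)
    (hnn : ∀ z, 0 ≤ mU z - mL z)
    (d : ℝ → EuclideanSpace ℝ (Fin ℓ) → ℝ)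
    (hd : ∀ η z, HasDerivAt (fun t => (inner ℝ p (g t z) : ℝ)) (d η z) η)
    (hdb : ∀ η z, |d η z| ≤ M) :
    HasDerivAt (fun η => switchInt P p g mL mU η₀ η) 0 η₀ ∧
    ∀ q : ℕ → ℝ, Tendsto q atTop (nhdsWithin η₀ {η₀}ᶜ) →
      Tendsto (fun n => |switchInt P p g mL mU η₀ (q n)| / |q n - η₀|) atTop (nhds 0) :=
  stmt18_general P M g hgmeas p η₀ hzero mL mU hmb d hd hdb
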